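/- arXiv:1911.12541 — 2 statements merged into one kernel-verified Lean document; each statement's English description precedes it below -/
import Mathlib

section
/- In a 2-connected graph G containing an odd cycle C and two internally disjoint paths P₁, P₂ from a vertex ξ ∉ V(C) to distinct vertices v₁, v₂ on C (each meeting C only in its endpoint), the vertex ξ lies on an odd cycle of G: if W₁, W₂ are the two arcs of C between v₁ and v₂ with L(W₁) odd, then P₁ ∪ P₂ ∪ W₁ is an odd cycle when L(P₁) + L(P₂) is even, and P₁ ∪ P₂ ∪ W₂ is an odd cycle when L(P₁) + L(P₂) is odd. -/
/-! Splicing `P₁`, an arc of `C` and `P₂` gives a closed walk through `ξ` which is a cycle, since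
the three paths meet only in their shared endpoints. Its length is `L(P₁) + L(P₂)` plus the length
of the arc; as `L(W₁)` is odd and `L(W₂) = L(C) - L(W₁)` is even, one of the two arcs makes it odd. -/

open Matrix SimpleGraph
open scoped Classical

/-- The signless Laplacian matrix `Q(G) = D(G) + A(G)` of a simple graph. -/
noncomputable def signlessLaplacian {V : Type*} [Fintype V] (G : SimpleGraph V) :
    Matrix V V ℝ := fun i j =>
  (if i = j then ((G.neighborSet i).ncard : ℝ) else 0) + (if G.Adj i j then 1 else 0)

/-- The least eigenvalue `q(G)` of the signless Laplacian of `G`. -/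
noncomputable def leastQEig {V : Type*} [Fintype V] (G : SimpleGraph V) : ℝ :=
  sInf {μ : ℝ | ∃ x : V → ℝ, x ≠ 0 ∧ (signlessLaplacian G).mulVec x = μ • x}

/-- A graph is 2-connected if it has at least 3 vertices and no cut vertex. -/
def TwoConnected {V : Type*} [Fintype V] (G : SimpleGraph V) : Prop :=
  3 ≤ Fintype.card V ∧
    ∀ v : V, (((⊤ : G.Subgraph).deleteVerts {v}).coe).Connected

/-- The cycle `C_n` on vertices `v_0, …, v_{n-1}`. -/
def cycleG (n : ℕ) : SimpleGraph (Fin n) :=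
  SimpleGraph.fromRel (fun i j => (i.val + 1) % n = j.val)

/-- `H(i₁,…,i_k)`: the cycle `C_n` together with the chords `v_i v_{n-i}` for `i ∈ S`. -/
def Hgraph (n : ℕ) (S : Finset ℕ) : SimpleGraph (Fin n) :=
  cycleG n ⊔ SimpleGraph.fromRel (fun a b => ∃ i ∈ S, a.val = i ∧ b.val = n - i)

/-- `Θ(j,k)`: the odd cycle `v₁v₂⋯v_{n-1}v₁` plus a vertex `v₀` adjacent to `v_j` and `v_k`. -/
def thetaJK (n j k : ℕ) : SimpleGraph (Fin n) :=
  SimpleGraph.fromRel (fun a b =>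
    (1 ≤ a.val ∧ b.val = a.val + 1) ∨ (a.val = 1 ∧ b.val = n - 1) ∨
      (a.val = 0 ∧ (b.val = j ∨ b.val = k)))

/-- The graph `Θ = Θ(2, n-1)`. -/
def thetaG (n : ℕ) : SimpleGraph (Fin n) := thetaJK n 2 (n - 1)

namespace SimpleGraph.Walk
variable {V : Type*} {G : SimpleGraph V}


theorem IsPath.start_notMem_support_tail {u v : V} {p : G.Walk u v} (hp : p.IsPath) :
    u ∉ p.support.tail := by
  have h := hp.support_nodup
  rw [← cons_tail_support] at h
  exact (List.nodup_cons.mp h).1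

theorem IsPath.append {u v w : V} {p : G.Walk u v} {q : G.Walk v w} (hp : p.IsPath)
    (hq : q.IsPath) (h : ∀ x ∈ p.support, x ∈ q.support → x = v) : (p.append q).IsPath := by
  rw [isPath_def, support_append, List.nodup_append]
  refine ⟨hp.support_nodup, hq.support_nodup.sublist q.support.tail_sublist, ?_⟩
  rintro x hxp _ hxq rfl
  rw [h x hxp (List.mem_of_mem_tail hxq)] at hxq
  exact hq.start_notMem_support_tail hxq

theorem isCycle_append_append_reverse {u a b : V} {p : G.Walk u a} {w : G.Walk a b}
    {q : G.Walk u b} (hp : p.IsPath) (hw : w.IsPath) (hq : q.IsPath) (hua : u ≠ a)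
    (hab : a ≠ b) (hpw : ∀ x ∈ p.support, x ∈ w.support → x = a)
    (hqw : ∀ x ∈ q.support, x ∈ w.support → x = b)
    (hpq : ∀ x ∈ p.support, x ∈ q.support → x = u) :
    (p.append (w.append q.reverse)).IsCycle := by
  have hpw' : (p.append w).IsPath := hp.append hw hpw
  rw [append_assoc]
  refine hpw'.isCycle_append hq.reverse (fun x hx hx' => ?_) (Or.inl ?_)
  · have hxq : x ∈ q.support := by
      simpa using List.mem_of_mem_tail hx'
    rcases (mem_support_append_iff p w).mp (List.mem_of_mem_tail hx) with hxp | hxw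
    · rw [hpq x hxp hxq] at hx
      exact hpw'.start_notMem_support_tail hx
    · rw [hqw x hxq hxw] at hx'
      exact hq.reverse.start_notMem_support_tail hx'
  · have := (not_nil_iff_lt_length (p := p)).mp (not_nil_of_ne hua)
    have := (not_nil_iff_lt_length (p := w)).mp (not_nil_of_ne hab)
    rw [length_append]; omega

end SimpleGraph.Walk

open SimpleGraph.Walk

theorem stmt7_general {V : Type*} (G : SimpleGraph V) {v₁ v₂ ξ : V} (hv : v₁ ≠ v₂)
    (W₁ W₂ : G.Walk v₁ v₂) (hW₁ : W₁.IsPath) (hW₂ : W₂.IsPath)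
    (hCodd : Odd (W₁.length + W₂.length))
    (hW₁odd : Odd W₁.length)
    (hξ₁ : ξ ∉ W₁.support)
    (P₁ : G.Walk ξ v₁) (P₂ : G.Walk ξ v₂) (hP₁ : P₁.IsPath) (hP₂ : P₂.IsPath)
    (hP₁C : ∀ a ∈ P₁.support, (a ∈ W₁.support ∨ a ∈ W₂.support) → a = v₁)
    (hP₂C : ∀ a ∈ P₂.support, (a ∈ W₁.support ∨ a ∈ W₂.support) → a = v₂)
    (hP₁₂ : ∀ a, a ∈ P₁.support → a ∈ P₂.support → a = ξ) :
    (Even (P₁.length + P₂.length) →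
      (P₁.append (W₁.append P₂.reverse)).IsCycle ∧
        Odd (P₁.append (W₁.append P₂.reverse)).length) ∧
    (Odd (P₁.length + P₂.length) →
      (P₁.append (W₂.append P₂.reverse)).IsCycle ∧
        Odd (P₁.append (W₂.append P₂.reverse)).length) ∧
    ∃ (a : V) (c : G.Walk a a), c.IsCycle ∧ Odd c.length ∧ ξ ∈ c.support := by
  have hξv₁ : ξ ≠ v₁ := fun h => hξ₁ (h ▸ W₁.start_mem_support)
  have hlen (W : G.Walk v₁ v₂) :
      (P₁.append (W.append P₂.reverse)).length = P₁.length + P₂.length + W.length := by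
    simp only [length_append, length_reverse]; omega
  have hW₂even : Even W₂.length := (Nat.odd_add.mp hCodd).mp hW₁odd
  have h₁ (h : Even (P₁.length + P₂.length)) :
      (P₁.append (W₁.append P₂.reverse)).IsCycle ∧
        Odd (P₁.append (W₁.append P₂.reverse)).length :=
    ⟨isCycle_append_append_reverse hP₁ hW₁ hP₂ hξv₁ hv (fun a ha hw => hP₁C a ha (.inl hw))
      (fun a ha hw => hP₂C a ha (.inl hw)) hP₁₂, hlen W₁ ▸ h.add_odd hW₁odd⟩
  have h₂ (h : Odd (P₁.length + P₂.length)) :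
      (P₁.append (W₂.append P₂.reverse)).IsCycle ∧
        Odd (P₁.append (W₂.append P₂.reverse)).length :=
    ⟨isCycle_append_append_reverse hP₁ hW₂ hP₂ hξv₁ hv (fun a ha hw => hP₁C a ha (.inr hw))
      (fun a ha hw => hP₂C a ha (.inr hw)) hP₁₂, hlen W₂ ▸ h.add_even hW₂even⟩
  refine ⟨h₁, h₂, ?_⟩
  rcases Nat.even_or_odd (P₁.length + P₂.length) with h | h
  · exact ⟨ξ, _, (h₁ h).1, (h₁ h).2, start_mem_support _⟩
  · exact ⟨ξ, _, (h₂ h).1, (h₂ h).2, start_mem_support _⟩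

theorem stmt7 {V : Type*} (G : SimpleGraph V) {v₁ v₂ ξ : V} (hv : v₁ ≠ v₂)
    (W₁ W₂ : G.Walk v₁ v₂) (hW₁ : W₁.IsPath) (hW₂ : W₂.IsPath)
    (hC : (W₁.append W₂.reverse).IsCycle) (hCodd : Odd (W₁.length + W₂.length))
    (hW₁odd : Odd W₁.length)
    (hξ₁ : ξ ∉ W₁.support) (hξ₂ : ξ ∉ W₂.support)
    (P₁ : G.Walk ξ v₁) (P₂ : G.Walk ξ v₂) (hP₁ : P₁.IsPath) (hP₂ : P₂.IsPath)
    (hP₁C : ∀ a ∈ P₁.support, (a ∈ W₁.support ∨ a ∈ W₂.support) → a = v₁)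
    (hP₂C : ∀ a ∈ P₂.support, (a ∈ W₁.support ∨ a ∈ W₂.support) → a = v₂)
    (hP₁₂ : ∀ a, a ∈ P₁.support → a ∈ P₂.support → a = ξ) :
    (Even (P₁.length + P₂.length) →
      (P₁.append (W₁.append P₂.reverse)).IsCycle ∧
        Odd (P₁.append (W₁.append P₂.reverse)).length) ∧
    (Odd (P₁.length + P₂.length) →
      (P₁.append (W₂.append P₂.reverse)).IsCycle ∧
        Odd (P₁.append (W₂.append P₂.reverse)).length) ∧
    ∃ (a : V) (c : G.Walk a a), c.IsCycle ∧ Odd c.length ∧ ξ ∈ c.support :=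
  stmt7_general G hv W₁ W₂ hW₁ hW₂ hCodd hW₁odd hξ₁ P₁ P₂ hP₁ hP₂ hP₁C hP₂C hP₁₂
end

section
/- Let n ≥ 3 be odd and G a nonbipartite 2-connected graph of order n that contains an odd cycle C with |V(C)| < n. Then q(C_n) < q(G) whenever C contains a vertex v_μ with |x(v_μ)| maximal for some eigenvector X of Q(G) corresponding to q(G). -/
open Matrix SimpleGraph
open scoped Classical

/-!
Rotate `C` to start at `v_μ` and let `k = |V(C)|`. Read `X` along `C` and continue with
`x(v_μ), -x(v_μ), x(v_μ), …` on the remaining `n - k` positions; as `n - k` is even, this is a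
vector `z` on `C_n` whose energy `∑ (z_i + z_{i+1})²` equals the energy of `X` on the edges of
`C`, while `‖X‖² ≤ ‖z‖²` by maximality of `|x(v_μ)|`. Hence
`q(C_n) ‖z‖² ≤ ∑_{uv ∈ E(C)} (x_u + x_v)² ≤ q(G) ‖X‖² ≤ q(G) ‖z‖²`, and `q(G) > 0` because an
eigenvector for `0` alternates in sign along edges, which the odd cycle through `v_μ` forbids.
If `q(G) ≤ q(C_n)`, take a vertex `w` off `C`: the chain is then tight, forcing `x_j = -x_w` for
every neighbour `j` of `w`, so the eigen-equation at `w` gives `x_w = 0`; but then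
`‖X‖² < ‖z‖²`, a contradiction.
-/

theorem Nat.add_one_mod_eq_ite {t n : ℕ} (ht : t < n) :
    (t + 1) % n = if t + 1 = n then 0 else t + 1 := by
  split_ifs with h
  · rw [h, Nat.mod_self]
  · exact Nat.mod_eq_of_lt (by omega)

theorem Finset.sum_add_sub_le_sum_range_add_mul {V : Type*} [Fintype V] [DecidableEq V]
    {f : V → ℝ} {M : ℝ} (hf : ∀ v, f v ≤ M) {u : ℕ → V} {k : ℕ}
    (hu : Set.InjOn u (Finset.range k)) {w : V} (hw : w ∉ (Finset.range k).image u) :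
    ∑ v, f v + (M - f w) ≤ ∑ t ∈ Finset.range k, f (u t) + (Fintype.card V - k) * M := by
  set S := (Finset.range k).image u
  have hS : S.card = k := by rw [Finset.card_image_of_injOn hu, Finset.card_range]
  have hw' : M - f w ≤ ∑ v ∈ Finset.univ \ S, (M - f v) :=
    Finset.single_le_sum (fun v _ => sub_nonneg.2 (hf v)) (by simpa using hw)
  have hcard : ((Finset.univ \ S).card : ℝ) = Fintype.card V - k := by
    rw [Finset.card_sdiff_of_subset (Finset.subset_univ S), Finset.card_univ, hS,
      Nat.cast_sub (hS ▸ S.card_le_univ)]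
  rw [Finset.sum_sub_distrib, Finset.sum_const, nsmul_eq_mul, hcard] at hw'
  rw [← Finset.sum_sdiff (Finset.subset_univ S), Finset.sum_image hu]
  linarith

theorem Matrix.IsHermitian.exists_eigenvalue_mul_dotProduct_le {ι : Type*} [Fintype ι]
    [DecidableEq ι] [Nonempty ι] {A : Matrix ι ι ℝ} (hA : A.IsHermitian) (z : ι → ℝ) :
    ∃ (μ : ℝ) (y : ι → ℝ), y ≠ 0 ∧ A *ᵥ y = μ • y ∧ μ * (z ⬝ᵥ z) ≤ z ⬝ᵥ (A *ᵥ z) := by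
  obtain ⟨i₀, -, hi₀⟩ := Finset.exists_min_image Finset.univ hA.eigenvalues Finset.univ_nonempty
  refine ⟨hA.eigenvalues i₀, hA.eigenvectorBasis i₀,
    fun h => hA.eigenvectorBasis.orthonormal.ne_zero i₀ (by simpa using h),
    hA.mulVec_eigenvectorBasis i₀, ?_⟩
  set U : Matrix ι ι ℝ := (hA.eigenvectorUnitary : Matrix ι ι ℝ)
  have hUU : U * star U = 1 := Matrix.mem_unitaryGroup_iff.1 hA.eigenvectorUnitary.2
  set w : ι → ℝ := z ᵥ* U
  have hw : star U *ᵥ z = w := by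
    rw [Matrix.star_eq_conjTranspose, Matrix.conjTranspose_eq_transpose_of_trivial]
    exact Matrix.mulVec_transpose U z
  have hww : w ⬝ᵥ w = z ⬝ᵥ z := by
    nth_rewrite 2 [← hw]
    rw [← dotProduct_mulVec, mulVec_mulVec, hUU, one_mulVec]
  have hdiag : z ⬝ᵥ (A *ᵥ z) = ∑ i, hA.eigenvalues i * w i ^ 2 := by
    nth_rewrite 1 [hA.spectral_theorem]
    rw [Unitary.conjStarAlgAut_apply, ← mulVec_mulVec, ← mulVec_mulVec, hw, dotProduct_mulVec]
    simp only [dotProduct, mulVec_diagonal, Function.comp_apply, RCLike.ofReal_real_eq_id, id_eq]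
    exact Finset.sum_congr rfl fun i _ => by ring
  rw [hdiag, ← hww, dotProduct, Finset.mul_sum]
  exact Finset.sum_le_sum fun i _ => by
    rw [← sq]; exact mul_le_mul_of_nonneg_right (hi₀ i (Finset.mem_univ i)) (sq_nonneg _)

namespace SimpleGraph

section Walks

variable {V : Type*} {G : SimpleGraph V}

def edgeSq (x : V → ℝ) : Sym2 V → ℝ :=
  Sym2.lift ⟨fun u v => (x u + x v) ^ 2, fun u v => by ring⟩

@[simp] theorem edgeSq_mk (x : V → ℝ) (u v : V) : edgeSq x s(u, v) = (x u + x v) ^ 2 := rfl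

theorem edgeSq_nonneg (x : V → ℝ) (e : Sym2 V) : 0 ≤ edgeSq x e := by
  induction e using Sym2.ind with | _ u v => exact sq_nonneg _

theorem Walk.sum_map_edges {M : Type*} [AddCommMonoid M] (f : Sym2 V → M) {a b : V}
    (w : G.Walk a b) :
    (w.edges.map f).sum = ∑ t ∈ Finset.range w.length, f s(w.getVert t, w.getVert (t + 1)) := by
  induction w with
  | nil => simp
  | cons h p ih =>
    rw [Walk.edges_cons, List.map_cons, List.sum_cons, ih, Walk.length_cons,
      Finset.sum_range_succ', add_comm]
    simp

theorem Walk.apply_eq_neg_one_pow_mul {x : V → ℝ} (hx : ∀ u v, G.Adj u v → x v = -x u)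
    {a b : V} (w : G.Walk a b) : x b = (-1) ^ w.length * x a := by
  induction w with
  | nil => simp
  | cons h p ih => rw [ih, hx _ _ h, Walk.length_cons, pow_succ]; ring

theorem Walk.IsTrail.sum_map_edges_add_sum_le {f : Sym2 V → ℝ} (hf : ∀ e, 0 ≤ f e)
    [Fintype G.edgeSet] {a b : V} {c : G.Walk a b} (hc : c.IsTrail) {s : Finset (Sym2 V)}
    (hs : s ⊆ G.edgeFinset) (hsc : ∀ e ∈ s, e ∉ c.edges) :
    (c.edges.map f).sum + ∑ e ∈ s, f e ≤ ∑ e ∈ G.edgeFinset, f e := by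
  classical
  rw [← List.sum_toFinset f hc.edges_nodup, ← Finset.sum_union
    (Finset.disjoint_right.2 fun e he => by simpa using hsc e he)]
  refine Finset.sum_le_sum_of_subset_of_nonneg (Finset.union_subset ?_ hs) fun e _ _ => hf e
  intro e he
  exact G.mem_edgeFinset.2 (c.edges_subset_edgeSet (List.mem_toFinset.1 he))

theorem Walk.exists_notMem_support [Fintype V] {v : V} {c : G.Walk v v} (hc : ¬c.Nil)
    (hlen : c.length < Fintype.card V) : ∃ w, w ∉ c.support := by
  classical
  have hcard : c.support.toFinset.card < (Finset.univ : Finset V).card := by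
    rw [← c.cons_tail_support, List.toFinset_cons,
      Finset.insert_eq_of_mem (List.mem_toFinset.2 (c.end_mem_tail_support hc)), Finset.card_univ]
    exact (List.toFinset_card_le _).trans_lt (by rwa [List.length_tail, length_support])
  obtain ⟨w, -, hw⟩ := Finset.exists_mem_notMem_of_card_lt_card hcard
  exact ⟨w, by simpa using hw⟩

theorem Walk.IsCycle.dotProduct_self_add_sub_le [Fintype V] {v : V} {c : G.Walk v v}
    (hc : c.IsCycle) {x : V → ℝ} (hx : ∀ u, |x u| ≤ |x v|) {w : V} (hw : w ∉ c.support) :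
    x ⬝ᵥ x + (x v ^ 2 - x w ^ 2)
      ≤ ∑ t ∈ Finset.range c.length, x (c.getVert t) ^ 2
        + (Fintype.card V - c.length) * x v ^ 2 := by
  classical
  have hinj : Set.InjOn c.getVert (Finset.range c.length) := hc.getVert_injOn'.mono fun t ht => by
    rw [Finset.coe_range, Set.mem_Iio] at ht
    rw [Set.mem_ofPred_eq]
    omega
  have hw' : w ∉ (Finset.range c.length).image c.getVert := fun h => by
    obtain ⟨t, -, rfl⟩ := Finset.mem_image.1 h
    exact hw (c.getVert_mem_support t)
  simpa only [dotProduct, ← sq] using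
    Finset.sum_add_sub_le_sum_range_add_mul (f := fun u => x u ^ 2) (fun u => sq_le_sq.2 (hx u))
      hinj hw'

end Walks

variable {V : Type*} [Fintype V] (G : SimpleGraph V)

theorem signlessLaplacian_eq_degMatrix_add_adjMatrix :
    signlessLaplacian G = G.degMatrix ℝ + G.adjMatrix ℝ := by
  ext i j
  simp only [signlessLaplacian, Matrix.add_apply, degMatrix, diagonal_apply, adjMatrix_apply,
    Set.ncard_eq_toFinset_card', Set.toFinset_card, card_neighborSet_eq_degree]

theorem isHermitian_signlessLaplacian : (signlessLaplacian G).IsHermitian := by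
  rw [signlessLaplacian_eq_degMatrix_add_adjMatrix]
  exact (G.isHermitian_degMatrix ℝ).add (G.isHermitian_adjMatrix ℝ)

theorem signlessLaplacian_mulVec_apply (x : V → ℝ) (v : V) :
    (signlessLaplacian G *ᵥ x) v = G.degree v * x v + ∑ u ∈ G.neighborFinset v, x u := by
  rw [signlessLaplacian_eq_degMatrix_add_adjMatrix, add_mulVec, Pi.add_apply,
    degMatrix_mulVec_apply, adjMatrix_mulVec_apply]

theorem sum_darts_eq_sum_sum_adj {M : Type*} [AddCommMonoid M] (f : V → V → M) :
    ∑ d : G.Dart, f d.fst d.snd = ∑ i, ∑ j, if G.Adj i j then f i j else 0 := by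
  rw [← Fintype.sum_prod_type', ← Finset.sum_filter]
  exact Finset.sum_bij' (fun d _ ↦ (d.fst, d.snd)) (fun p h ↦ ⟨p, (Finset.mem_filter.1 h).2⟩)
    (by simp) (by simp) (by simp) (by simp) (by simp)

theorem sum_dart_edge_eq_two_nsmul {M : Type*} [AddCommMonoid M] (f : Sym2 V → M) :
    ∑ d : G.Dart, f d.edge = 2 • ∑ e ∈ G.edgeFinset, f e := by
  rw [← Finset.sum_fiberwise_of_maps_to (g := Dart.edge) (t := G.edgeFinset)
    (fun d _ => by simp), Finset.smul_sum]
  refine Finset.sum_congr rfl fun e he => ?_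
  rw [Finset.sum_congr rfl fun d hd => by rw [(Finset.mem_filter.1 hd).2], Finset.sum_const,
    G.dart_edge_fiber_card e (G.mem_edgeFinset.1 he)]

theorem dotProduct_signlessLaplacian_mulVec (x : V → ℝ) :
    x ⬝ᵥ (signlessLaplacian G *ᵥ x) = ∑ e ∈ G.edgeFinset, edgeSq x e := by
  have hdarts : ∑ d : G.Dart, edgeSq x d.edge = 2 * (x ⬝ᵥ (signlessLaplacian G *ᵥ x)) := by
    change ∑ d : G.Dart, (x d.fst + x d.snd) ^ 2 = _
    rw [sum_darts_eq_sum_sum_adj G (fun i j => (x i + x j) ^ 2),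
      signlessLaplacian_eq_degMatrix_add_adjMatrix, add_mulVec, dotProduct_add,
      dotProduct_mulVec_degMatrix, dotProduct_mulVec_adjMatrix]
    have hswap : ∑ i, ∑ j, (if G.Adj i j then x j ^ 2 else 0)
        = ∑ i, ∑ j, if G.Adj i j then x i ^ 2 else 0 := by
      rw [Finset.sum_comm]
      simp_rw [G.adj_comm]
    have hsplit : ∀ i j, (if G.Adj i j then (x i + x j) ^ 2 else 0)
        = (if G.Adj i j then x i ^ 2 else 0)
        + (if G.Adj i j then x j ^ 2 else 0) + 2 * (if G.Adj i j then x i * x j else 0) := by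
      intro i j; split_ifs <;> ring
    simp_rw [hsplit, Finset.sum_add_distrib, ← Finset.mul_sum, hswap, degree_eq_sum_if_adj,
      Finset.sum_mul, ite_mul, one_mul, zero_mul, ← sq]
    ring
  rw [sum_dart_edge_eq_two_nsmul, nsmul_eq_mul] at hdarts
  push_cast at hdarts
  linarith

theorem dotProduct_signlessLaplacian_mulVec_nonneg (x : V → ℝ) :
    0 ≤ x ⬝ᵥ (signlessLaplacian G *ᵥ x) := by
  rw [dotProduct_signlessLaplacian_mulVec]
  exact Finset.sum_nonneg fun e _ => edgeSq_nonneg x e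

variable {G} in
theorem nonneg_of_signlessLaplacian_mulVec_eq_smul {y : V → ℝ} {μ : ℝ} (hy : y ≠ 0)
    (h : signlessLaplacian G *ᵥ y = μ • y) : 0 ≤ μ := by
  have hyy : 0 < y ⬝ᵥ y := by simpa using dotProduct_self_star_pos_iff.2 hy
  have := G.dotProduct_signlessLaplacian_mulVec_nonneg y
  rw [h, dotProduct_smul, smul_eq_mul] at this
  exact nonneg_of_mul_nonneg_left this hyy

theorem leastQEig_mul_dotProduct_le [Nonempty V] (z : V → ℝ) :
    leastQEig G * (z ⬝ᵥ z) ≤ z ⬝ᵥ (signlessLaplacian G *ᵥ z) := by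
  obtain ⟨μ, y, hy, hμ, hz⟩ :=
    (isHermitian_signlessLaplacian G).exists_eigenvalue_mul_dotProduct_le z
  have hbdd : BddBelow {μ : ℝ | ∃ x : V → ℝ, x ≠ 0 ∧ (signlessLaplacian G).mulVec x = μ • x} :=
    ⟨0, fun _ ⟨_, hx, h⟩ => nonneg_of_signlessLaplacian_mulVec_eq_smul hx h⟩
  exact (mul_le_mul_of_nonneg_right (csInf_le hbdd ⟨y, hy, hμ⟩)
    (dotProduct_self_star_nonneg z)).trans hz

variable {G} in
theorem eq_zero_of_dotProduct_signlessLaplacian_mulVec_eq_zero {x : V → ℝ}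
    (hx : x ⬝ᵥ (signlessLaplacian G *ᵥ x) = 0) {a : V} (w : G.Walk a a) (hw : Odd w.length) :
    x a = 0 := by
  rw [dotProduct_signlessLaplacian_mulVec,
    Finset.sum_eq_zero_iff_of_nonneg fun e _ => edgeSq_nonneg x e] at hx
  have hneg : ∀ u v, G.Adj u v → x v = -x u := fun u v huv => by
    have := hx s(u, v) (G.mem_edgeFinset.2 huv)
    rw [edgeSq_mk, sq_eq_zero_iff] at this
    linarith
  have := w.apply_eq_neg_one_pow_mul hneg
  rw [hw.neg_one_pow] at this
  linarith

variable {G} in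
theorem pos_of_signlessLaplacian_mulVec_eq_smul {x : V → ℝ} {μ : ℝ}
    (h : signlessLaplacian G *ᵥ x = μ • x) {a : V} (w : G.Walk a a) (hw : Odd w.length)
    (ha : x a ≠ 0) : 0 < μ := by
  have hx : x ≠ 0 := fun hx => ha (by simp [hx])
  refine (nonneg_of_signlessLaplacian_mulVec_eq_smul hx h).lt_of_ne fun hμ => ha ?_
  refine eq_zero_of_dotProduct_signlessLaplacian_mulVec_eq_zero ?_ w hw
  rw [h, ← hμ, zero_smul, dotProduct_zero]

variable {G} in
theorem eq_zero_of_signlessLaplacian_mulVec_eq_smul {x : V → ℝ} {μ : ℝ}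
    (h : signlessLaplacian G *ᵥ x = μ • x) (hμ : μ ≠ 0) {w : V}
    (hw : ∀ j ∈ G.neighborFinset w, x j = -x w) : x w = 0 := by
  have hμw := congrFun h w
  rw [signlessLaplacian_mulVec_apply, Finset.sum_congr rfl hw, Finset.sum_const,
    card_neighborFinset_eq_degree, Pi.smul_apply, smul_eq_mul, nsmul_eq_mul] at hμw
  exact (mul_eq_zero.1 (by linarith : μ * x w = 0)).resolve_left hμ

end SimpleGraph

theorem edgeFinset_cycleG {n : ℕ} (hn : 3 ≤ n) :
    (cycleG n).edgeFinset =
      Finset.univ.image fun i : Fin n => s(i, ⟨(i + 1) % n, Nat.mod_lt _ (by omega)⟩) := by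
  ext e
  induction e using Sym2.ind with | _ a b =>
  rw [mem_edgeFinset, mem_edgeSet, cycleG, fromRel_adj]
  simp only [Finset.mem_image, Finset.mem_univ, true_and, Sym2.eq_iff, Fin.ext_iff]
  have ha := Nat.add_one_mod_eq_ite a.2
  have hb := Nat.add_one_mod_eq_ite b.2
  constructor
  · rintro ⟨-, h | h⟩
    · exact ⟨a, Or.inl ⟨rfl, h⟩⟩
    · exact ⟨b, Or.inr ⟨rfl, h⟩⟩
  · rintro ⟨i, ⟨h₁, h₂⟩ | ⟨h₁, h₂⟩⟩
    · obtain rfl := Fin.ext h₁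
      refine ⟨fun hab => ?_, Or.inl h₂⟩
      subst hab
      split_ifs at ha <;> omega
    · obtain rfl := Fin.ext h₁
      refine ⟨fun hab => ?_, Or.inr h₂⟩
      subst hab
      split_ifs at hb <;> omega

theorem leastQEig_cycleG_mul_sum_sq_le {n : ℕ} (hn : 3 ≤ n) (w : ℕ → ℝ) :
    leastQEig (cycleG n) * ∑ t ∈ Finset.range n, w t ^ 2
      ≤ ∑ t ∈ Finset.range n, (w t + w ((t + 1) % n)) ^ 2 := by
  have : Nonempty (Fin n) := ⟨⟨0, by omega⟩⟩
  have h := (cycleG n).leastQEig_mul_dotProduct_le fun i => w i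
  rw [dotProduct_signlessLaplacian_mulVec, edgeFinset_cycleG hn, Finset.sum_image] at h
  · simpa only [dotProduct, ← sq, edgeSq_mk, Fin.sum_univ_eq_sum_range (fun t => w t ^ 2),
      Fin.sum_univ_eq_sum_range fun t => (w t + w ((t + 1) % n)) ^ 2] using h
  · intro i _ j _ hij
    simp only [Sym2.eq_iff, Fin.ext_iff] at hij
    have hi := Nat.add_one_mod_eq_ite i.2
    have hj := Nat.add_one_mod_eq_ite j.2
    rcases hij with ⟨h, -⟩ | ⟨h₁, h₂⟩
    · exact Fin.ext h
    · split_ifs at hi hj <;> omega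

def extendAlternating (y : ℕ → ℝ) (k t : ℕ) : ℝ :=
  if t < k then y t else (-1) ^ (t - k) * y k

section extendAlternating

variable (y : ℕ → ℝ) {k : ℕ}

theorem extendAlternating_of_le {t : ℕ} (h : t ≤ k) : extendAlternating y k t = y t := by
  rcases h.lt_or_eq with h | rfl
  · exact if_pos h
  · simp [extendAlternating]

theorem extendAlternating_add_succ {t : ℕ} (h : k ≤ t) :
    extendAlternating y k t + extendAlternating y k (t + 1) = 0 := by
  simp only [extendAlternating, if_neg (show ¬t < k by omega), if_neg (show ¬t + 1 < k by omega),
    show t + 1 - k = t - k + 1 by omega, pow_succ]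
  ring

theorem sum_range_extendAlternating_sq {n : ℕ} (hkn : k ≤ n) :
    ∑ t ∈ Finset.range n, extendAlternating y k t ^ 2
      = ∑ t ∈ Finset.range k, y t ^ 2 + (n - k : ℝ) * y k ^ 2 := by
  rw [← Finset.sum_range_add_sum_Ico _ hkn]
  congr 1
  · exact Finset.sum_congr rfl fun t ht =>
      by rw [extendAlternating_of_le y (Finset.mem_range.1 ht).le]
  · rw [Finset.sum_congr rfl fun t ht => show extendAlternating y k t ^ 2 = y k ^ 2 by
      simp [extendAlternating, (Finset.mem_Ico.1 ht).1.not_gt, mul_pow, ← pow_mul, pow_mul'],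
      Finset.sum_const, Nat.card_Ico, nsmul_eq_mul, Nat.cast_sub hkn]

theorem sum_range_extendAlternating_add_sq {n : ℕ} (hk : Odd k) (hn : Odd n) (hkn : k < n)
    (hy : y k = y 0) :
    ∑ t ∈ Finset.range n, (extendAlternating y k t + extendAlternating y k ((t + 1) % n)) ^ 2
      = ∑ t ∈ Finset.range k, (y t + y (t + 1)) ^ 2 := by
  obtain ⟨m, rfl⟩ : ∃ m, n = m + 1 := ⟨n - 1, by omega⟩
  have hkm : k ≤ m := by omega
  have hlast : extendAlternating y k m + extendAlternating y k 0 = 0 := by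
    have : Odd (m - k) := Nat.Even.sub_odd hkm (by simpa [Nat.odd_add_one] using hn) hk
    simp [extendAlternating, hk.pos, show ¬m < k by omega, this.neg_one_pow, hy]
  have htail : ∑ t ∈ Finset.Ico k m,
      (extendAlternating y k t + extendAlternating y k ((t + 1) % (m + 1))) ^ 2 = 0 :=
    Finset.sum_eq_zero fun t ht => by
      obtain ⟨hkt, htm⟩ := Finset.mem_Ico.1 ht
      rw [Nat.mod_eq_of_lt (by omega), extendAlternating_add_succ y hkt, sq, zero_mul]
  rw [Finset.sum_range_succ, Nat.mod_self, hlast, ← Finset.sum_range_add_sum_Ico _ hkm, htail]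
  rw [zero_pow two_ne_zero, add_zero, add_zero]
  refine Finset.sum_congr rfl fun t ht => ?_
  have ht := Finset.mem_range.1 ht
  rw [Nat.mod_eq_of_lt (by omega), extendAlternating_of_le y ht.le, extendAlternating_of_le y ht]

end extendAlternating

theorem SimpleGraph.Walk.leastQEig_cycleG_mul_le_sum_edgeSq {V : Type*} {G : SimpleGraph V}
    {n : ℕ} (hn : 3 ≤ n) (hodd : Odd n) {v : V} (c : G.Walk v v) (hc : Odd c.length)
    (hlen : c.length < n) (x : V → ℝ) :
    leastQEig (cycleG n) * (∑ t ∈ Finset.range c.length, x (c.getVert t) ^ 2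
      + (n - c.length) * x v ^ 2) ≤ (c.edges.map (edgeSq x)).sum := by
  set y : ℕ → ℝ := fun t => x (c.getVert t)
  have hy : y c.length = x v := by simp only [y, getVert_length]
  have h := leastQEig_cycleG_mul_sum_sq_le hn (extendAlternating y c.length)
  rwa [sum_range_extendAlternating_sq y hlen.le, hy,
    sum_range_extendAlternating_add_sq y hc hodd hlen (by simp only [hy, y, getVert_zero]),
    ← Finset.sum_congr rfl fun t _ => edgeSq_mk x _ _, ← sum_map_edges] at h

theorem stmt14_general (n : ℕ) (hn : 3 ≤ n) (hodd : Odd n) {V : Type*} [Fintype V]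
    (G : SimpleGraph V) (hcard : Fintype.card V = n)
    (x : V → ℝ) (hx : x ≠ 0)
    (heig : (signlessLaplacian G).mulVec x = leastQEig G • x)
    (vμ : V) (hmax : ∀ v : V, |x v| ≤ |x vμ|)
    {a : V} (c : G.Walk a a) (hc : c.IsCycle) (hcodd : Odd c.length)
    (hvμ : vμ ∈ c.support) (hlen : c.length < n) :
    leastQEig (cycleG n) < leastQEig G := by
  set q := leastQEig G
  set c' := c.rotate vμ hvμ
  have hc' : c'.IsCycle := hc.rotate hvμ
  have hk : c'.length = c.length := c.length_rotate vμ hvμ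
  have hxvμ : x vμ ≠ 0 := fun h =>
    hx (funext fun v => abs_nonpos_iff.1 ((hmax v).trans_eq (by rw [h, abs_zero])))
  have hq : 0 < q := pos_of_signlessLaplacian_mulVec_eq_smul heig c' (hk ▸ hcodd) hxvμ
  obtain ⟨w, hw⟩ := c'.exists_notMem_support hc'.not_nil (by omega)
  -- `S` is `‖z‖²` for the test vector `z` on `C_n` described at the top.
  obtain ⟨S, hCn, hnorm⟩ : ∃ S, leastQEig (cycleG n) * S ≤ (c'.edges.map (edgeSq x)).sum ∧
      x ⬝ᵥ x + (x vμ ^ 2 - x w ^ 2) ≤ S :=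
    ⟨_, c'.leastQEig_cycleG_mul_le_sum_edgeSq hn hodd (hk ▸ hcodd) (by omega) x,
      hcard ▸ hc'.dotProduct_self_add_sub_le hmax hw⟩
  have hwvμ : x w ^ 2 ≤ x vμ ^ 2 := sq_le_sq.2 (hmax w)
  have hS : 0 ≤ S := by linarith [show 0 ≤ x ⬝ᵥ x by simpa using dotProduct_self_star_nonneg x]
  by_contra! hle
  have key : ∀ s ⊆ G.edgeFinset, (∀ e ∈ s, e ∉ c'.edges) →
      ∑ e ∈ s, edgeSq x e ≤ -q * (x vμ ^ 2 - x w ^ 2) := by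
    intro s hs hsc
    have h := hc'.isTrail.sum_map_edges_add_sum_le (edgeSq_nonneg x) hs hsc
    rw [← dotProduct_signlessLaplacian_mulVec, heig, dotProduct_smul, smul_eq_mul] at h
    nlinarith [mul_le_mul_of_nonneg_left hnorm hq.le, mul_le_mul_of_nonneg_right hle hS]
  have hxw : x w = 0 := eq_zero_of_signlessLaplacian_mulVec_eq_smul heig hq.ne' fun j hj => by
    have h := key {s(w, j)} (by simpa using hj)
      (by simpa using fun h => hw (c'.fst_mem_support_of_mem_edges h))
    rw [Finset.sum_singleton, edgeSq_mk] at h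
    have h0 : (x w + x j) ^ 2 = 0 := le_antisymm (h.trans (by nlinarith)) (sq_nonneg _)
    linarith [pow_eq_zero_iff two_ne_zero |>.1 h0]
  have h := key ∅ (Finset.empty_subset _) (by simp)
  rw [Finset.sum_empty, hxw] at h
  nlinarith [pow_pos (abs_pos.2 hxvμ) 2, sq_abs (x vμ)]

theorem stmt14 (n : ℕ) (hn : 3 ≤ n) (hodd : Odd n) {V : Type*} [Fintype V]
    (G : SimpleGraph V) (hcard : Fintype.card V = n)
    (h2 : TwoConnected G) (hnb : ¬ G.Colorable 2)
    (x : V → ℝ) (hx : x ≠ 0)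
    (heig : (signlessLaplacian G).mulVec x = leastQEig G • x)
    (vμ : V) (hmax : ∀ v : V, |x v| ≤ |x vμ|)
    {a : V} (c : G.Walk a a) (hc : c.IsCycle) (hcodd : Odd c.length)
    (hvμ : vμ ∈ c.support) (hlen : c.length < n) :
    leastQEig (cycleG n) < leastQEig G :=
  stmt14_general n hn hodd G hcard x hx heig vμ hmax c hc hcodd hvμ hlen
end
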